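/- arXiv:0806.0282 — 2 statements merged into one kernel-verified Lean document; each statement's English description precedes it below -/
import Mathlib

section
/- Let v and u be K-adjacent x-vertices (some K-edge joins v and u), and suppose a(v, K, K, 0) ≤ R and a(v, I, K, 0) ≤ R. Then for every feasible solution x*, the output values of the local algorithm satisfy x_v + x_u ≥ ω(x*). -/
/-- An undirected multigraph with two-coloured vertices and two-coloured edges.
`isX v` means `v` is an x-vertex (otherwise `v` is a 0-vertex);
`isK e` means `e` is a K-edge (otherwise `e` is an I-edge). -/
structure ColoredMultigraph (V : Type) (E : Type) where
  ends : E → Sym2 V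
  isX : V → Prop
  isK : E → Prop

namespace ColoredMultigraph

variable {V E : Type} (G : ColoredMultigraph V E)

/-- Edge `e` joins vertices `a` and `b`. -/
def Joins (e : E) (a b : V) : Prop := G.ends e = s(a, b)

/-- `AltWalk G v c c' u n` : there is an alternating walk from `v` to `u` whose
first edge has colour `c` (`true` = K-edge, `false` = I-edge), whose last edge
has colour `c'`, and whose K-length (number of K-edges) is `n`. -/
inductive AltWalk : V → Bool → Bool → V → ℕ → Prop
  | single (e : E) (a b : V) (c : Bool) :
      G.Joins e a b → (G.isK e ↔ c = true) → AltWalk a c c b (cond c 1 0)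
  | cons (e : E) (a b : V) (c c' : Bool) (u : V) (n : ℕ) :
      G.Joins e a b → (G.isK e ↔ c = true) → AltWalk b (!c) c' u n →
      AltWalk a c c' u (cond c 1 0 + n)

/-- `a(v,X,Y,0)` : the minimum K-length of a `(v,X,Y,0)`-walk, that is, a walk
from `v` to some 0-vertex starting with an X-edge and ending with a Y-edge
(`∞` if no such walk exists). -/
noncomputable def walkInf (v : V) (X Y : Bool) : ℕ∞ :=
  sInf {n : ℕ∞ | ∃ m : ℕ, n = m ∧ ∃ u, G.AltWalk v X Y u m ∧ ¬ G.isX u}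

/-- `A(v,X)` : the maximum K-length of an alternating walk starting at `v` with
an X-edge (`∞` if walks of arbitrarily large K-length exist). -/
noncomputable def walkSup (v : V) (X : Bool) : ℕ∞ :=
  sSup {n : ℕ∞ | ∃ m : ℕ, n = m ∧ ∃ Y u, G.AltWalk v X Y u m}

/-- `b(v,X,Y,0) = min {a(v,X,Y,0), R}`. -/
noncomputable def bnd (R : ℕ) (v : V) (X Y : Bool) : ℕ∞ :=
  min (G.walkInf v X Y) (R : ℕ∞)

/-- `B(v,X) = min {A(v,X), R}`. -/
noncomputable def Bnd (R : ℕ) (v : V) (X : Bool) : ℕ∞ :=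
  min (G.walkSup v X) (R : ℕ∞)

/-- The value `p_v` chosen by the local algorithm:
`p_v = b(v,I,K,0)` if `a(v,K,K,0) ≤ R`, and
`p_v = min {b(v,I,K,0), B(v,K)}` otherwise. -/
noncomputable def pv (R : ℕ) (v : V) : ℕ∞ :=
  if G.walkInf v true true ≤ (R : ℕ∞) then G.bnd R v false true
  else min (G.bnd R v false true) (G.Bnd R v true)

/-- The value `q_v` chosen by the local algorithm:
`q_v = b(v,K,K,0)` if `a(v,I,K,0) ≤ R`, and
`q_v = min {b(v,K,K,0), B(v,I)}` otherwise. -/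
noncomputable def qv (R : ℕ) (v : V) : ℕ∞ :=
  if G.walkInf v false true ≤ (R : ℕ∞) then G.bnd R v true true
  else min (G.bnd R v true true) (G.Bnd R v false)

open Classical in
/-- The output value of the local algorithm: `p_v / (p_v + q_v)` at an x-vertex
`v`, and `0` at a 0-vertex. -/
noncomputable def xval (R : ℕ) (v : V) : ℝ :=
  if G.isX v then
    ((G.pv R v).toNat : ℝ) / (((G.pv R v).toNat : ℝ) + ((G.qv R v).toNat : ℝ))
  else 0

/-- Structural assumptions: every x-vertex is incident to at least one K-edge
and at least one I-edge, every 0-vertex is incident to exactly one edge, and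
every edge has at least one x-vertex endpoint. -/
def WellFormed : Prop :=
  (∀ v, G.isX v → ∃ e, v ∈ G.ends e ∧ G.isK e) ∧
  (∀ v, G.isX v → ∃ e, v ∈ G.ends e ∧ ¬ G.isK e) ∧
  (∀ v, ¬ G.isX v → ∃! e, v ∈ G.ends e) ∧
  (∀ e a b, G.Joins e a b → G.isX a ∨ G.isX b)

/-- A feasible solution: nonnegative, zero at 0-vertices, and satisfying
`x a + x b ≤ 1` for every I-edge `{a, b}`. -/
def Feasible (x : V → ℝ) : Prop :=
  (∀ a, 0 ≤ x a) ∧ (∀ a, ¬ G.isX a → x a = 0) ∧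
  (∀ e a b, G.Joins e a b → ¬ G.isK e → x a + x b ≤ 1)

/-- The utility `ω(x)` of a solution: the minimum (infimum) over K-edges
`{a, b}` of `x a + x b`. -/
noncomputable def utility (x : V → ℝ) : ℝ :=
  sInf {r : ℝ | ∃ e a b, G.Joins e a b ∧ G.isK e ∧ r = x a + x b}

end ColoredMultigraph

/-!
Let `k = a(v,I,K,0)` and `q = a(v,K,K,0)`; both are at most `R`, so the algorithm outputs
`x_v = k / (k + q)`. Along an alternating walk ending with a K-edge at a 0-vertex, each K-edge
contributes at least `ω` and each I-edge at most `1` to an alternating sum of the values of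
`x*`, so the two optimal walks at `v` give `(k + q) ω ≤ k + q - 1`. Prepending the K-edge `uv`
to walks shows `p_u ≥ q - 1` and `q_u ≤ k + 1`, hence `x_u ≥ (q - 1) / (k + q)`, and the two
bounds add up.
-/

lemma div_add_le_div_add {a b c d : ℝ} (hac : a ≤ c) (hdb : d ≤ b) (hc : 0 ≤ c) (hd : 0 ≤ d)
    (hab : 0 < a + b) : a / (a + b) ≤ c / (c + d) := by
  rcases (add_nonneg hc hd).eq_or_lt with hcd | hcd
  · rw [← hcd, div_zero]
    exact div_nonpos_of_nonpos_of_nonneg (by linarith) hab.le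
  · rw [div_le_div_iff₀ hab hcd]
    nlinarith [mul_le_mul_of_nonneg_right hac hd, mul_le_mul_of_nonneg_left hdb hc]

lemma le_div_add_div_of_mul_le {ω k q P Q : ℝ} (hk : 0 ≤ k) (hq : 0 ≤ q) (hP : 0 ≤ P)
    (hQ : 0 ≤ Q) (hω : (k + q) * ω ≤ k + q - 1) (hqP : q ≤ P + 1) (hQk : Q ≤ k + 1) :
    ω ≤ k / (k + q) + P / (P + Q) := by
  have hkq : 0 < k + q := by
    by_contra! h
    have h0 : k + q = 0 := by linarith
    rw [h0, zero_mul] at hω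
    linarith
  have hxu : (q - 1) / (k + q) ≤ P / (P + Q) := by
    have := div_add_le_div_add (a := q - 1) (b := k + 1) (by linarith) hQk hP hQ (by linarith)
    rwa [show q - 1 + (k + 1) = k + q by ring] at this
  calc ω ≤ (k + (q - 1)) / (k + q) := by rw [le_div_iff₀ hkq]; linarith
    _ = k / (k + q) + (q - 1) / (k + q) := add_div _ _ _
    _ ≤ k / (k + q) + P / (P + Q) := by gcongr

namespace ColoredMultigraph

variable {V E : Type} {G : ColoredMultigraph V E}

lemma Joins.symm {e : E} {a b : V} (h : G.Joins e a b) : G.Joins e b a := by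
  unfold Joins at *
  rw [h, Sym2.eq_swap]

lemma AltWalk.kLength_mul_le {x : V → ℝ} {ω : ℝ}
    (hK : ∀ e a b, G.Joins e a b → G.isK e → ω ≤ x a + x b)
    (hI : ∀ e a b, G.Joins e a b → ¬ G.isK e → x a + x b ≤ 1)
    (h0 : ∀ a, ¬ G.isX a → x a = 0)
    {a u : V} {c : Bool} {n : ℕ} (hw : G.AltWalk a c true u n) (hu : ¬ G.isX u) :
    (n : ℝ) * ω ≤ n - cond c (1 - x a) (x a) := by
  generalize hc' : true = c' at hw
  induction hw with
  | single e a b c hj hk =>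
    subst hc'
    have := hK e a b hj (hk.mpr rfl)
    simp only [cond_true, Nat.cast_one, h0 b hu] at this ⊢
    linarith
  | cons e a b c c' w n hj hk _ ih =>
    have ih := ih hu hc'
    cases c with
    | true =>
      have := hK e a b hj (hk.mpr rfl)
      simp only [Bool.not_true, cond_false, cond_true, Nat.cast_add, Nat.cast_one] at ih ⊢
      linarith
    | false =>
      have := hI e a b hj (fun hKe => by simpa using hk.mp hKe)
      simp only [Bool.not_false, cond_false, cond_true, Nat.cast_add, Nat.cast_zero] at ih ⊢
      linarith

variable (G)

lemma utility_le {x : V → ℝ} (hx : ∀ a, 0 ≤ x a) {e : E} {a b : V} (hj : G.Joins e a b)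
    (hK : G.isK e) : G.utility x ≤ x a + x b :=
  csInf_le ⟨0, by rintro r ⟨e, a, b, -, -, rfl⟩; exact add_nonneg (hx a) (hx b)⟩
    ⟨e, a, b, hj, hK, rfl⟩

lemma walkInf_le {v u : V} {X Y : Bool} {m : ℕ} (hw : G.AltWalk v X Y u m) (hu : ¬ G.isX u) :
    G.walkInf v X Y ≤ m :=
  sInf_le ⟨m, rfl, u, hw, hu⟩

lemma exists_altWalk_of_walkInf_ne_top {v : V} {X Y : Bool} (h : G.walkInf v X Y ≠ ⊤) :
    ∃ (m : ℕ) (u : V), G.walkInf v X Y = m ∧ G.AltWalk v X Y u m ∧ ¬ G.isX u := by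
  have hne : {n : ℕ∞ | ∃ m : ℕ, n = m ∧ ∃ u, G.AltWalk v X Y u m ∧ ¬ G.isX u}.Nonempty :=
    Set.nonempty_iff_ne_empty.mpr fun he => h (by rw [walkInf, he, sInf_empty])
  obtain ⟨m, hm, u, hw, hu⟩ := csInf_mem hne
  exact ⟨m, u, hm, hw, hu⟩

lemma walkInf_le_walkSup {v : V} {X Y : Bool} (h : G.walkInf v X Y ≠ ⊤) :
    G.walkInf v X Y ≤ G.walkSup v X := by
  obtain ⟨m, u, hm, hw, -⟩ := G.exists_altWalk_of_walkInf_ne_top h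
  exact hm ▸ le_sSup ⟨m, rfl, Y, u, hw⟩

lemma walkInf_le_walkInf_add_one {e : E} {a b : V} (hj : G.Joins e a b) (hK : G.isK e)
    (Y : Bool) : G.walkInf a true Y ≤ G.walkInf b false Y + 1 := by
  by_cases h : G.walkInf b false Y = ⊤
  · simp [h]
  obtain ⟨m, u, hm, hw, hu⟩ := G.exists_altWalk_of_walkInf_ne_top h
  have hw' : G.AltWalk a true Y u (1 + m) :=
    AltWalk.cons e a b true Y u m hj (iff_of_true hK rfl) hw
  rw [hm, add_comm]
  exact_mod_cast G.walkInf_le hw' hu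

/-- If `a(w,K,K,0)` is finite but exceeds `R`, then `A(w,K) ≥ a(w,K,K,0) > R`, so the term
`B(w,K) = R` in the second branch of `p_w` is inactive. -/
lemma pv_eq_bnd (R : ℕ) {w : V} (h : G.walkInf w true true ≠ ⊤) :
    G.pv R w = G.bnd R w false true := by
  rw [pv]
  split_ifs with hR
  · rfl
  · refine min_eq_left ((min_le_right _ _).trans (le_min ?_ le_rfl))
    exact (not_le.mp hR).le.trans (G.walkInf_le_walkSup h)

lemma pv_le (R : ℕ) (w : V) : G.pv R w ≤ R := by
  rw [pv]
  split_ifs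
  exacts [min_le_right _ _, (min_le_left _ _).trans (min_le_right _ _)]

lemma qv_le_bnd (R : ℕ) (w : V) : G.qv R w ≤ G.bnd R w true true := by
  rw [qv]
  split_ifs
  exacts [le_rfl, min_le_left _ _]

lemma pv_eq_walkInf {R : ℕ} {v : V} (hKK : G.walkInf v true true ≤ R)
    (hIK : G.walkInf v false true ≤ R) : G.pv R v = G.walkInf v false true := by
  rw [pv, if_pos hKK, bnd, min_eq_left hIK]

lemma qv_eq_walkInf {R : ℕ} {v : V} (hKK : G.walkInf v true true ≤ R)
    (hIK : G.walkInf v false true ≤ R) : G.qv R v = G.walkInf v true true := by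
  rw [qv, if_pos hIK, bnd, min_eq_left hKK]

lemma walkInf_le_pv_add_one {R : ℕ} {e : E} {v u : V} (hj : G.Joins e v u) (hK : G.isK e)
    (hKK : G.walkInf v true true ≤ R) (hIK : G.walkInf v false true ≠ ⊤) :
    G.walkInf v true true ≤ G.pv R u + 1 := by
  have hu : G.walkInf u true true ≠ ⊤ :=
    ne_top_of_le_ne_top (by simpa using hIK) (G.walkInf_le_walkInf_add_one hj.symm hK true)
  rw [G.pv_eq_bnd R hu, bnd, ← min_add_add_right]
  exact le_min (G.walkInf_le_walkInf_add_one hj hK true) (hKK.trans le_self_add)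

lemma qv_le_walkInf_add_one (R : ℕ) {e : E} {v u : V} (hj : G.Joins e v u) (hK : G.isK e) :
    G.qv R u ≤ G.walkInf v false true + 1 :=
  (G.qv_le_bnd R u).trans <|
    (min_le_left _ _).trans (G.walkInf_le_walkInf_add_one hj.symm hK true)

end ColoredMultigraph

open ColoredMultigraph in
theorem stmt_13_general {V E : Type} (G : ColoredMultigraph V E)
    (R : ℕ) (v u : V) (hv : G.isX v) (hu : G.isX u)
    (hadj : ∃ e, G.Joins e v u ∧ G.isK e)
    (haKK : G.walkInf v true true ≤ (R : ℕ∞))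
    (haIK : G.walkInf v false true ≤ (R : ℕ∞))
    (xstar : V → ℝ) (hxstar : G.Feasible xstar) :
    G.utility xstar ≤ G.xval R v + G.xval R u := by
  obtain ⟨hnonneg, hzero, hI⟩ := hxstar
  obtain ⟨e, hvu, hK⟩ := hadj
  have hIfin : G.walkInf v false true ≠ ⊤ := ne_top_of_le_ne_top (ENat.natCast_ne_top R) haIK
  have hKfin : G.walkInf v true true ≠ ⊤ := ne_top_of_le_ne_top (ENat.natCast_ne_top R) haKK
  obtain ⟨k, wk, hk, hwk, hwk0⟩ := G.exists_altWalk_of_walkInf_ne_top hIfin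
  obtain ⟨q, wq, hq, hwq, hwq0⟩ := G.exists_altWalk_of_walkInf_ne_top hKfin
  have hω : ∀ e a b, G.Joins e a b → G.isK e → G.utility xstar ≤ xstar a + xstar b :=
    fun _ _ _ => G.utility_le hnonneg
  have hk_bound := hwk.kLength_mul_le hω hI hzero hwk0
  have hq_bound := hwq.kLength_mul_le hω hI hzero hwq0
  have hpu := G.walkInf_le_pv_add_one hvu hK haKK hIfin
  have hqu := G.qv_le_walkInf_add_one R hvu hK
  have hpu_fin : G.pv R u ≠ ⊤ := ne_top_of_le_ne_top (ENat.natCast_ne_top R) (G.pv_le R u)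
  have hqu_fin : G.qv R u ≠ ⊤ := ne_top_of_le_ne_top (by simpa using hIfin) hqu
  rw [xval, if_pos hv, xval, if_pos hu, G.pv_eq_walkInf haKK haIK, G.qv_eq_walkInf haKK haIK,
    hk, hq]
  rw [← ENat.natCast_toNat hpu_fin, hq] at hpu
  rw [← ENat.natCast_toNat hqu_fin, hk] at hqu
  simp only [ENat.toNat_natCast]
  simp only [cond_true, cond_false] at hk_bound hq_bound
  refine le_div_add_div_of_mul_le (by positivity) (by positivity) (by positivity) (by positivity)
    (by linarith) (by exact_mod_cast hpu) (by exact_mod_cast hqu)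

/-- Let `v` and `u` be K-adjacent x-vertices, and suppose
`a(v,K,K,0) ≤ R` and `a(v,I,K,0) ≤ R`. Then for every feasible solution `x*`,
the output values of the local algorithm satisfy `x_v + x_u ≥ ω(x*)`. -/
theorem stmt_13 {V E : Type} (G : ColoredMultigraph V E) (hG : G.WellFormed)
    (R : ℕ) (hR : 1 ≤ R) (v u : V) (hv : G.isX v) (hu : G.isX u)
    (hadj : ∃ e, G.Joins e v u ∧ G.isK e)
    (haKK : G.walkInf v true true ≤ (R : ℕ∞))
    (haIK : G.walkInf v false true ≤ (R : ℕ∞))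
    (xstar : V → ℝ) (hxstar : G.Feasible xstar) :
    G.utility xstar ≤ G.xval R v + G.xval R u :=
  stmt_13_general G R v u hv hu hadj haKK haIK xstar hxstar
end

section
/- Let v and u be K-adjacent x-vertices (some K-edge joins v and u), and suppose a(v, K, K, 0) > R, a(v, I, K, 0) > R, a(u, K, K, 0) > R, a(u, I, K, 0) > R, and A(v, I) ≥ R. Then for every feasible solution x*, the output values of the local algorithm satisfy x_v + x_u ≥ (1 − 1/R)·ω(x*). -/
namespace ColoredMultigraph

variable {V E : Type} (G : ColoredMultigraph V E)

lemma joins_symm {e a b} (h : G.Joins e a b) : G.Joins e b a := by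
  unfold Joins at *; rw [h, Sym2.eq_swap]

lemma util_le {x : V → ℝ} (hx : G.Feasible x) {e a b} (hj : G.Joins e a b)
    (hK : G.isK e) : G.utility x ≤ x a + x b := by
  apply csInf_le
  · refine ⟨0, fun r hr => ?_⟩
    obtain ⟨e', a', b', -, -, rfl⟩ := hr
    exact add_nonneg (hx.1 a') (hx.1 b')
  · exact ⟨e, a, b, hj, hK, rfl⟩

lemma walk_inv {x : V → ℝ} (hx : G.Feasible x) {a c Y z n}
    (w : G.AltWalk a c Y z n) :
    (c = true → ((n : ℝ) - 1) * (G.utility x - 1) ≤ x a) ∧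
    (c = false → 1 ≤ n → ((n : ℝ) - 1) * (G.utility x - 1) ≤ 1 - x a) := by
  induction w with
  | single e a b c hj hk =>
      constructor
      · rintro rfl
        simp only [cond_true, Nat.cast_one, sub_self, zero_mul]
        exact hx.1 a
      · rintro rfl h1
        simp at h1
  | cons e a b c c' u n hj hk w ih =>
      constructor
      · rintro rfl
        have hK : G.isK e := hk.mpr rfl
        have h1 := G.util_le hx hj hK
        simp only [cond_true]
        rcases Nat.eq_zero_or_pos n with h0 | hpos
        · subst h0
          norm_num
          exact hx.1 a
        · have h2 := ih.2 rfl hpos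
          push_cast
          nlinarith [h1, h2]
      · rintro rfl h1
        have hI : ¬ G.isK e := by simp [hk]
        have h2 := hx.2.2 e a b hj hI
        have h3 := ih.1 rfl
        simp only [cond_false, zero_add] at h1 ⊢
        linarith

lemma le_walkSup {v : V} {X Y : Bool} {z m} (w : G.AltWalk v X Y z m) :
    (m : ℕ∞) ≤ G.walkSup v X :=
  le_sSup ⟨m, rfl, Y, z, w⟩

lemma exists_walk_of_le_walkSup {v : V} {X : Bool} {k : ℕ} (hk : 1 ≤ k)
    (h : (k : ℕ∞) ≤ G.walkSup v X) :
    ∃ m : ℕ, k ≤ m ∧ ∃ Y z, G.AltWalk v X Y z m := by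
  by_contra hc
  push_neg at hc
  have hle : G.walkSup v X ≤ ((k - 1 : ℕ) : ℕ∞) := by
    apply sSup_le
    rintro n ⟨m, rfl, Y, z, w⟩
    have hm : m ≤ k - 1 := by
      by_contra hmk
      exact hc m (by omega) Y z w
    exact_mod_cast hm
  have hlt : ((k - 1 : ℕ) : ℕ∞) < (k : ℕ∞) := by
    exact_mod_cast Nat.sub_lt hk Nat.one_pos
  exact absurd (h.trans hle) (not_le.mpr hlt)

end ColoredMultigraph

/-- Let `v` and `u` be K-adjacent x-vertices, and suppose
`a(v,K,K,0) > R`, `a(v,I,K,0) > R`, `a(u,K,K,0) > R`, `a(u,I,K,0) > R`, and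
`A(v,I) ≥ R`. Then for every feasible solution `x*`, the output values of the
local algorithm satisfy `x_v + x_u ≥ (1 − 1/R) * ω(x*)`. -/
theorem stmt_17 {V E : Type} (G : ColoredMultigraph V E) (hG : G.WellFormed)
    (R : ℕ) (hR : 1 ≤ R) (v u : V) (hv : G.isX v) (hu : G.isX u)
    (hadj : ∃ e, G.Joins e v u ∧ G.isK e)
    (hvKK : (R : ℕ∞) < G.walkInf v true true)
    (hvIK : (R : ℕ∞) < G.walkInf v false true)
    (huKK : (R : ℕ∞) < G.walkInf u true true)
    (huIK : (R : ℕ∞) < G.walkInf u false true)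
    (hAvI : (R : ℕ∞) ≤ G.walkSup v false)
    (xstar : V → ℝ) (hxstar : G.Feasible xstar) :
    (1 - 1 / (R : ℝ)) * G.utility xstar ≤ G.xval R v + G.xval R u := by
  obtain ⟨e, hj, hK⟩ := hadj
  have hj' : G.Joins e u v := G.joins_symm hj
  have hKiff : G.isK e ↔ true = true := iff_of_true hK rfl
  -- a long walk from v starting with an I-edge
  obtain ⟨m, hmR, Ym, zm, wm⟩ := G.exists_walk_of_le_walkSup hR hAvI
  -- walkSup u true ≥ R
  have wu : G.AltWalk u true Ym zm (cond true 1 0 + m) :=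
    .cons e u v true Ym zm m hj' hKiff wm
  have huK : (R : ℕ∞) ≤ G.walkSup u true := by
    refine le_trans ?_ (G.le_walkSup wu)
    simp only [cond_true]
    exact_mod_cast le_trans hmR (Nat.le_add_left m 1)
  -- walkSup v true ≥ 1
  have wv1 : G.AltWalk v true true u (cond true 1 0) :=
    .single e v u true hj hKiff
  have hvK1 : (1 : ℕ∞) ≤ G.walkSup v true := by
    have := G.le_walkSup wv1
    simpa using this
  -- evaluate the algorithm's outputs in ℕ∞
  have hqv : G.qv R v = (R : ℕ∞) := by
    unfold ColoredMultigraph.qv ColoredMultigraph.bnd ColoredMultigraph.Bnd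
    rw [if_neg (not_le.mpr hvIK), min_eq_right hvKK.le, min_eq_right hAvI, min_self]
  have hpu : G.pv R u = (R : ℕ∞) := by
    unfold ColoredMultigraph.pv ColoredMultigraph.bnd ColoredMultigraph.Bnd
    rw [if_neg (not_le.mpr huKK), min_eq_right huIK.le, min_eq_right huK, min_self]
  have hpv : G.pv R v = min (G.walkSup v true) (R : ℕ∞) := by
    unfold ColoredMultigraph.pv ColoredMultigraph.bnd ColoredMultigraph.Bnd
    rw [if_neg (not_le.mpr hvKK), min_eq_right hvIK.le,
      min_eq_right (min_le_right _ _)]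
  have hqu : G.qv R u = min (G.walkSup u false) (R : ℕ∞) := by
    unfold ColoredMultigraph.qv ColoredMultigraph.bnd ColoredMultigraph.Bnd
    rw [if_neg (not_le.mpr huIK), min_eq_right huKK.le,
      min_eq_right (min_le_right _ _)]
  set pE := min (G.walkSup v true) (R : ℕ∞) with hpE
  set sE := min (G.walkSup u false) (R : ℕ∞) with hsE
  have hpEt : pE ≠ ⊤ := fun h => by
    simp [pE, min_eq_top] at h
  have hsEt : sE ≠ ⊤ := fun h => by
    simp [sE, min_eq_top] at h
  set pN := pE.toNat with hpN
  set sN := sE.toNat with hsN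
  have hpcast : (pN : ℕ∞) = pE := ENat.coe_toNat hpEt
  have hscast : (sN : ℕ∞) = sE := ENat.coe_toNat hsEt
  have hpNR : pN ≤ R := by
    have : (pN : ℕ∞) ≤ (R : ℕ∞) := hpcast ▸ min_le_right _ _
    exact_mod_cast this
  have hsNR : sN ≤ R := by
    have : (sN : ℕ∞) ≤ (R : ℕ∞) := hscast ▸ min_le_right _ _
    exact_mod_cast this
  have hpN1 : 1 ≤ pN := by
    have h1 : (1 : ℕ∞) ≤ pE := le_min hvK1 (by exact_mod_cast hR)
    rw [← hpcast] at h1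
    exact_mod_cast h1
  -- p ≥ s
  have hps : sN ≤ pN := by
    rcases Nat.eq_zero_or_pos sN with h0 | hpos
    · omega
    · -- extract a walk from u starting with an I-edge of K-length ≥ sN
      have hsle : (sN : ℕ∞) ≤ G.walkSup u false :=
        hscast ▸ min_le_left _ _
      obtain ⟨m', hm', Y', z', w'⟩ := G.exists_walk_of_le_walkSup hpos hsle
      have wv : G.AltWalk v true Y' z' (cond true 1 0 + m') :=
        .cons e v u true Y' z' m' hj hKiff w'
      have hle : (sN : ℕ∞) ≤ pE := by
        refine le_min ?_ (hscast ▸ min_le_right _ _)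
        refine le_trans ?_ (G.le_walkSup wv)
        simp only [cond_true]
        exact_mod_cast le_trans hm' (Nat.le_add_left m' 1)
      rw [← hpcast] at hle
      exact_mod_cast hle
  -- compute the two output values
  have hxv : G.xval R v = (pN : ℝ) / ((pN : ℝ) + (R : ℝ)) := by
    unfold ColoredMultigraph.xval
    rw [if_pos hv, hqv, hpv, ← hpcast]
    simp [ENat.toNat_coe]
  have hxu : G.xval R u = (R : ℝ) / ((R : ℝ) + (sN : ℝ)) := by
    unfold ColoredMultigraph.xval
    rw [if_pos hu, hpu, hqu, ← hscast]
    simp [ENat.toNat_coe]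
  have hR0 : (0 : ℝ) < R := by exact_mod_cast hR
  have hden1 : (0 : ℝ) < (pN : ℝ) + (R : ℝ) := by positivity
  have hden2 : (0 : ℝ) < (R : ℝ) + (sN : ℝ) := by positivity
  -- x_v + x_u ≥ 1
  have hsum : 1 ≤ G.xval R v + G.xval R u := by
    rw [hxv, hxu, div_add_div _ _ (ne_of_gt hden1) (ne_of_gt hden2),
      le_div_iff₀ (by positivity)]
    have : (sN : ℝ) ≤ (pN : ℝ) := by exact_mod_cast hps
    nlinarith [this, hR0.le]
  -- (1 - 1/R) * ω ≤ 1
  have homega : (1 - 1 / (R : ℝ)) * G.utility xstar ≤ 1 := by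
    set ω := G.utility xstar with hω
    rcases le_or_gt ω 1 with h1 | h1
    · have hf : (0 : ℝ) ≤ 1 - 1 / (R : ℝ) := by
        have : 1 / (R : ℝ) ≤ 1 := by
          rw [div_le_one hR0]; exact_mod_cast hR
        linarith
      have hpos : 0 < 1 / (R : ℝ) := by positivity
      calc (1 - 1 / (R : ℝ)) * ω ≤ (1 - 1 / (R : ℝ)) * 1 :=
            mul_le_mul_of_nonneg_left h1 hf
        _ ≤ 1 := by linarith
    · -- ω > 1 : use the long walk from v
      have hm1 : 1 ≤ m := le_trans hR hmR
      have hinv := (G.walk_inv hxstar wm).2 rfl hm1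
      rw [← hω] at hinv
      have hxv0 : 0 ≤ xstar v := hxstar.1 v
      have hmR' : (R : ℝ) ≤ (m : ℝ) := by exact_mod_cast hmR
      have key : ((R : ℝ) - 1) * (ω - 1) ≤ 1 := by
        have h2 : ((R : ℝ) - 1) * (ω - 1) ≤ ((m : ℝ) - 1) * (ω - 1) := by
          apply mul_le_mul_of_nonneg_right (by linarith) (by linarith)
        linarith
      have heq : (1 - 1 / (R : ℝ)) * ω = (((R : ℝ) - 1) * ω) / (R : ℝ) := by
        field_simp
      rw [heq, div_le_one hR0]
      linarith [key]
  linarith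
end
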